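/- Let F be a non-abelian free group, Δ a decomposition of F, φ a Δ-decomposable quasimorphism, ω a bounded symmetric Δ-continuous 2-cocycle, and ζ(g,g',h) = Σ_{j=1}^k φ(g_j)·ω(g_{j+1}⋯g_k g', h) for Δ(g) = (g₁,…,g_k). Then there is a constant C > 0 such that for all u₁, u₂, v ∈ F with u₁u₂ reduced, |ζ(u₁u₂,1,v) − ζ(u₁,u₂,v) − ζ(u₂,1,v)| ≤ C. -/

import Mathlib

/-! Common definitions: free groups, reduced products, (bounded) cochains,
decompositions of a free group, Brooks and Rolli quasimorphisms. -/

section Preamble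

variable {α : Type} [DecidableEq α]

/-- Word length of an element of a free group (length of its reduced word). -/
def wlen (g : FreeGroup α) : ℕ := g.toWord.length

/-- A product `g = g₁ ⋯ g_k` is reduced (no cancellation) if the word lengths add up. -/
def ReducedProd (l : List (FreeGroup α)) : Prop :=
  wlen l.prod = (l.map wlen).sum

/-- Inhomogeneous coboundary `δ¹φ(g,h) = φ(g) + φ(h) − φ(gh)`. -/
def d1 (φ : FreeGroup α → ℝ) (g h : FreeGroup α) : ℝ := φ g + φ h - φ (g * h)

/-- Inhomogeneous coboundary `δ²η`. -/
def d2 (η : FreeGroup α → FreeGroup α → ℝ) (g h i : FreeGroup α) : ℝ :=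
  η h i - η (g * h) i + η g (h * i) - η g h

/-- Inhomogeneous coboundary `δ³β`. -/
def d3 (β : FreeGroup α → FreeGroup α → FreeGroup α → ℝ) (g h i j : FreeGroup α) : ℝ :=
  β h i j - β (g * h) i j + β g (h * i) j - β g h (i * j) + β g h i

/-- A quasimorphism on the free group. -/
def IsQuasimorphism (φ : FreeGroup α → ℝ) : Prop :=
  ∃ D > (0 : ℝ), ∀ g h : FreeGroup α, |d1 φ g h| < D

/-- A symmetric map: `φ(g⁻¹) = −φ(g)`. -/
def IsSymmetricMap (φ : FreeGroup α → ℝ) : Prop :=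
  ∀ g : FreeGroup α, φ g⁻¹ = -φ g

/-- Longest common initial sequence of two lists. -/
def commonPrefix {β : Type} [DecidableEq β] : List β → List β → List β
  | a :: as, b :: bs => if a = b then a :: commonPrefix as bs else []
  | _, _ => []

/-- Reversed, entrywise-inverted list: `(g₁, …, g_k) ↦ (g_k⁻¹, …, g₁⁻¹)`. -/
def seqInv (l : List (FreeGroup α)) : List (FreeGroup α) :=
  (l.map fun x => x⁻¹).reverse

/-- `(c̲₁⁻¹)`: the common initial sequence of `Δ(g)` and `Δ(gh)`. -/
def cSeq1 (D : FreeGroup α → List (FreeGroup α)) (g h : FreeGroup α) : List (FreeGroup α) :=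
  commonPrefix (D g) (D (g * h))

/-- `(c̲₂⁻¹)`: the common initial sequence of `Δ(g⁻¹)` and `Δ(h)`. -/
def cSeq2 (D : FreeGroup α → List (FreeGroup α)) (g h : FreeGroup α) : List (FreeGroup α) :=
  commonPrefix (D g⁻¹) (D h)

/-- `(c̲₃⁻¹)`: the common initial sequence of `Δ(h⁻¹)` and `Δ(h⁻¹g⁻¹)`. -/
def cSeq3 (D : FreeGroup α → List (FreeGroup α)) (g h : FreeGroup α) : List (FreeGroup α) :=
  commonPrefix (D h⁻¹) (D (h⁻¹ * g⁻¹))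

/-- `(r̲₁)`: middle part of `Δ(g) = (c̲₁⁻¹)·(r̲₁)·(c̲₂)`. -/
def rSeq1 (D : FreeGroup α → List (FreeGroup α)) (g h : FreeGroup α) : List (FreeGroup α) :=
  ((D g).drop (cSeq1 D g h).length).take
    ((D g).length - (cSeq1 D g h).length - (cSeq2 D g h).length)

/-- `(r̲₂)`: middle part of `Δ(h) = (c̲₂⁻¹)·(r̲₂)·(c̲₃)`. -/
def rSeq2 (D : FreeGroup α → List (FreeGroup α)) (g h : FreeGroup α) : List (FreeGroup α) :=
  ((D h).drop (cSeq2 D g h).length).take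
    ((D h).length - (cSeq2 D g h).length - (cSeq3 D g h).length)

/-- `(r̲₃)`: middle part of `Δ(h⁻¹g⁻¹) = (c̲₃⁻¹)·(r̲₃)·(c̲₁)`. -/
def rSeq3 (D : FreeGroup α → List (FreeGroup α)) (g h : FreeGroup α) : List (FreeGroup α) :=
  ((D (h⁻¹ * g⁻¹)).drop (cSeq3 D g h).length).take
    ((D (h⁻¹ * g⁻¹)).length - (cSeq3 D g h).length - (cSeq1 D g h).length)

/-- A decomposition `Δ` of the free group `F` into pieces `P` (Definition 3.1). -/
structure Decomp (α : Type) [DecidableEq α] where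
  /-- the set of pieces -/
  pieces : Set (FreeGroup α)
  /-- the decomposition map `Δ` -/
  D : FreeGroup α → List (FreeGroup α)
  /-- the uniform bound `R` on the r-parts of `Δ`-triangles -/
  R : ℕ
  R_pos : 0 < R
  pieces_symm : ∀ p ∈ pieces, p⁻¹ ∈ pieces
  one_notin_pieces : (1 : FreeGroup α) ∉ pieces
  mem_pieces : ∀ g : FreeGroup α, ∀ p ∈ D g, p ∈ pieces
  prod_eq : ∀ g : FreeGroup α, (D g).prod = g
  reduced : ∀ g : FreeGroup α, ReducedProd (D g)
  inv_eq : ∀ g : FreeGroup α, D g⁻¹ = seqInv (D g)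
  infix_closed : ∀ (g : FreeGroup α) (l₁ l₂ l₃ : List (FreeGroup α)),
    D g = l₁ ++ l₂ ++ l₃ → D l₂.prod = l₂
  triangle₁ : ∀ g h : FreeGroup α, D g = cSeq1 D g h ++ rSeq1 D g h ++ seqInv (cSeq2 D g h)
  triangle₂ : ∀ g h : FreeGroup α, D h = cSeq2 D g h ++ rSeq2 D g h ++ seqInv (cSeq3 D g h)
  triangle₃ : ∀ g h : FreeGroup α,
    D (h⁻¹ * g⁻¹) = cSeq3 D g h ++ rSeq3 D g h ++ seqInv (cSeq1 D g h)
  rBound₁ : ∀ g h : FreeGroup α, (rSeq1 D g h).length ≤ R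
  rBound₂ : ∀ g h : FreeGroup α, (rSeq2 D g h).length ≤ R
  rBound₃ : ∀ g h : FreeGroup α, (rSeq3 D g h).length ≤ R

/-- The `Δ`-decomposable map `φ_{λ,Δ}(g) = Σ_j λ(g_j)`. -/
def decQM (D : FreeGroup α → List (FreeGroup α)) (lam : FreeGroup α → ℝ)
    (g : FreeGroup α) : ℝ :=
  ((D g).map lam).sum

/-- `φ` is a `Δ`-decomposable quasimorphism (Definition 3.8). -/
def IsDecomposable (dec : Decomp α) (φ : FreeGroup α → ℝ) : Prop :=
  ∃ lam : FreeGroup α → ℝ,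
    (∃ B : ℝ, ∀ p ∈ dec.pieces, |lam p| ≤ B) ∧
    (∀ p ∈ dec.pieces, lam p⁻¹ = -lam p) ∧
    φ = decQM dec.D lam

/-- Agreement (as an extended natural number) of two sequences:
`⊤` if they are equal, otherwise the length of their common initial sequence. -/
def seqAgree {β : Type} [DecidableEq β] (l l' : List β) : ℕ∞ :=
  if l = l' then ⊤ else ((commonPrefix l l').length : ℕ∞)

/-- The quantity `N_Δ((g,h),(g',h'))` measuring how much the `Δ`-triangles of the two
pairs agree around their centres. -/
noncomputable def NDelta (D : FreeGroup α → List (FreeGroup α))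
    (p q : FreeGroup α × FreeGroup α) : ℕ∞ :=
  if p = q then ⊤
  else if rSeq1 D p.1 p.2 = rSeq1 D q.1 q.2 ∧ rSeq2 D p.1 p.2 = rSeq2 D q.1 q.2 ∧
            rSeq3 D p.1 p.2 = rSeq3 D q.1 q.2 then
    min (seqAgree (seqInv (cSeq1 D p.1 p.2)) (seqInv (cSeq1 D q.1 q.2)))
      (min (seqAgree (seqInv (cSeq2 D p.1 p.2)) (seqInv (cSeq2 D q.1 q.2)))
        (seqAgree (seqInv (cSeq3 D p.1 p.2)) (seqInv (cSeq3 D q.1 q.2))))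
  else 0

/-- A bounded symmetric `2`-cocycle `ω` is `Δ`-continuous (Definition 3.12). -/
def DeltaContinuousCocycle (D : FreeGroup α → List (FreeGroup α))
    (ω : FreeGroup α → FreeGroup α → ℝ) : Prop :=
  ∃ s : ℕ → ℝ, (∀ j, 0 ≤ s j) ∧ Summable s ∧
    ∀ p q : FreeGroup α × FreeGroup α, p ≠ q → ∀ N : ℕ, NDelta D p q = (N : ℕ∞) →
      |ω p.1 p.2 - ω q.1 q.2| ≤ s N

/-- A quasimorphism `ψ` is `Δ`-continuous: it is symmetric and `δ¹ψ` is `Δ`-continuous. -/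
def DeltaContinuousQM (D : FreeGroup α → List (FreeGroup α)) (ψ : FreeGroup α → ℝ) : Prop :=
  IsSymmetricMap ψ ∧ IsQuasimorphism ψ ∧ DeltaContinuousCocycle D (d1 ψ)

/-- `ζ`-type sums: `zetaL A (g₁,…,g_k) g' h = Σ_j A(g_j, g_{j+1}⋯g_k·g', h)`. -/
def zetaL (A : FreeGroup α → FreeGroup α → FreeGroup α → ℝ) :
    List (FreeGroup α) → FreeGroup α → FreeGroup α → ℝ
  | [], _, _ => 0
  | p :: rest, g', h => A p (rest.prod * g') h + zetaL A rest g' h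

/-- `ζ(g,g',h) = Σ_j φ(g_j)·ω(g_{j+1}⋯g_k·g', h)` for `Δ(g) = (g₁,…,g_k)`. -/
def zetaD (D : FreeGroup α → List (FreeGroup α)) (φ : FreeGroup α → ℝ)
    (ω : FreeGroup α → FreeGroup α → ℝ) (g g' h : FreeGroup α) : ℝ :=
  zetaL (fun p u v => φ p * ω u v) (D g) g' h

/-- `w` is a subword of `g` (as reduced words). -/
def Subword (w g : FreeGroup α) : Prop :=
  w.toWord <:+: g.toWord

/-- `w` is non self-overlapping: there are no reduced words `x, y` with `x` nontrivial
such that `w = xyx` as a reduced word. -/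
def NonSelfOverlapping (w : FreeGroup α) : Prop :=
  ¬∃ x y : FreeGroup α, x ≠ 1 ∧ w = x * y * x ∧ ReducedProd [x, y, x]

/-- `ν_w(g)`: the number of occurrences of `w` as a subword of the reduced word `g`. -/
def occCount (w g : FreeGroup α) : ℕ :=
  ((List.range (g.toWord.length + 1)).filter
    (fun s => decide ((g.toWord.drop s).take w.toWord.length = w.toWord))).length

/-- The Brooks counting function `φ_w = ν_w − ν_{w⁻¹}`. -/
noncomputable def brooksQM (w : FreeGroup α) (g : FreeGroup α) : ℝ :=
  (occCount w g : ℝ) - (occCount w⁻¹ g : ℝ)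

/-- `φ` is a Brooks counting quasimorphism on some non self-overlapping word. -/
def IsBrooksQM (φ : FreeGroup α → ℝ) : Prop :=
  ∃ w : FreeGroup α, NonSelfOverlapping w ∧ φ = brooksQM w

/-- The interleaved list `(u₁, w^{ε₁}, u₂, …, u_{k−1}, w^{ε_{k−1}}, u_k)` built from
`us = (u₁,…,u_k)` and signs `eps = (ε₁,…,ε_{k−1})`. -/
def wfacList (w : FreeGroup α) : List (FreeGroup α) → List Bool → List (FreeGroup α)
  | [], _ => []
  | [u], _ => [u]
  | u :: us, [] => u :: wfacList w us []
  | u :: us, e :: eps => u :: (if e then w else w⁻¹) :: wfacList w us eps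

/-- `RolliWord l` : `l = ((n₁,m₁),…,(n_k,m_k))` encodes the normal form
`x_{n₁}^{m₁} ⋯ x_{n_k}^{m_k}` (all `m_j ≠ 0`, no consecutive equal indices). -/
def RolliWord {n : ℕ} (l : List (Fin n × ℤ)) : Prop :=
  (∀ p ∈ l, p.2 ≠ 0) ∧ l.Chain' fun p q => p.1 ≠ q.1

/-- The element `x_{n₁}^{m₁} ⋯ x_{n_k}^{m_k}` encoded by `l`. -/
def rolliProd {n : ℕ} (l : List (Fin n × ℤ)) : FreeGroup (Fin n) :=
  (l.map fun p => FreeGroup.of p.1 ^ p.2).prod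

/-- `φ` is a Rolli quasimorphism. -/
def IsRolliQM {n : ℕ} (φ : FreeGroup (Fin n) → ℝ) : Prop :=
  ∃ lam : Fin n → ℤ → ℝ,
    (∀ j, ∃ B : ℝ, ∀ m : ℤ, |lam j m| ≤ B) ∧
    (∀ j m, lam j (-m) = -lam j m) ∧
    φ 1 = 0 ∧
    ∀ l : List (Fin n × ℤ), RolliWord l → φ (rolliProd l) = (l.map fun p => lam p.1 p.2).sum

/-- The list of letters (as group elements) of the reduced word representing `g`. -/
def letters (g : FreeGroup α) : List (FreeGroup α) :=
  g.toWord.map fun p => FreeGroup.mk [p]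

/-- `d` is the common 2-path of `(g,h)`: `g = t₁⁻¹d` and `h = d⁻¹t₂` as reduced words,
with the tripod condition that `gh = t₁⁻¹t₂` is also reduced. -/
def IsCommon2Path (g h d : FreeGroup α) : Prop :=
  ∃ t₁ t₂ : FreeGroup α, g = t₁⁻¹ * d ∧ h = d⁻¹ * t₂ ∧
    ReducedProd [t₁⁻¹, d] ∧ ReducedProd [d⁻¹, t₂] ∧ ReducedProd [t₁⁻¹, t₂]

/-- Case (a) of the alignment of `g, h, i` (Figure 4a). -/
def Align3A (g h i : FreeGroup α) : Prop :=
  ∃ t₁ t₂ t₃ t₄ t₅ : FreeGroup α,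
    g = t₁ * t₂ ∧ h = t₂⁻¹ * t₃ * t₄ ∧ i = t₄⁻¹ * t₅ ∧
    ReducedProd [t₁, t₂] ∧ ReducedProd [t₂⁻¹, t₃, t₄] ∧ ReducedProd [t₄⁻¹, t₅] ∧
    ReducedProd [t₁, t₃, t₅]

/-- Case (b) of the alignment of `g, h, i` (Figure 4b). -/
def Align3B (g h i : FreeGroup α) : Prop :=
  ∃ t₁ t₂ t₃ t₄ t₅ : FreeGroup α,
    g = t₁ * t₂ * t₃ ∧ h = t₃⁻¹ * t₄ ∧ i = t₄⁻¹ * t₂⁻¹ * t₅ ∧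
    ReducedProd [t₁, t₂, t₃] ∧ ReducedProd [t₃⁻¹, t₄] ∧ ReducedProd [t₄⁻¹, t₂⁻¹, t₅] ∧
    ReducedProd [t₁, t₅]

/-- Case (c) of the alignment of `g, h, i` (Figure 4c), with common 3-path `c`. -/
def Align3C (g h i c : FreeGroup α) : Prop :=
  ∃ t₁ t₂ t₃ t₄ : FreeGroup α,
    g = t₁⁻¹ * c * t₂ ∧ h = t₂⁻¹ * c⁻¹ * t₃ ∧ i = t₃⁻¹ * c * t₄ ∧
    ReducedProd [t₁⁻¹, c, t₂] ∧ ReducedProd [t₂⁻¹, c⁻¹, t₃] ∧ ReducedProd [t₃⁻¹, c, t₄] ∧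
    ReducedProd [t₁⁻¹, t₃] ∧ ReducedProd [t₂⁻¹, t₄]

/-- `c` is the common 3-path of `(g,h,i)`: `c` in case (c), the identity otherwise. -/
def IsCommon3Path (g h i c : FreeGroup α) : Prop :=
  Align3C g h i c ∨ (c = 1 ∧ (Align3A g h i ∨ Align3B g h i))

end Preamble

/-! For reduced `u₁u₂` no cancellation happens between `Δ(u₁)` and `Δ(u₂)`, so the `Δ`-triangle
of `(u₁, u₂)` has `c̲₂` empty: `Δ(u₁) = c̲₁⁻¹ r̲₁`, `Δ(u₂) = r̲₂ c̲₃` and `Δ(u₁u₂) = c̲₁⁻¹ r̲₃⁻¹ c̲₃`.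
The terms of the three `ζ`-sums indexed by the common parts `c̲₁⁻¹` and `c̲₃` then cancel
exactly, since they see the same tail product; what survives are the terms indexed by the three
`r`-parts, at most `3R` terms each bounded by `sup |λ| · sup |ω|`. -/

theorem exists_cons_of_commonPrefix_ne_nil {β : Type} [DecidableEq β] {l l' : List β}
    (h : commonPrefix l l' ≠ []) : ∃ a t t', l = a :: t ∧ l' = a :: t' := by
  match l, l' with
  | a :: t, b :: t' =>
    by_cases hab : a = b
    · exact ⟨a, t, t', rfl, hab ▸ rfl⟩
    · simp [commonPrefix, hab] at h
  | [], _ => simp [commonPrefix] at h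
  | _ :: _, [] => simp [commonPrefix] at h

section Sequences

variable {α : Type}

@[simp]
theorem seqInv_append (l₁ l₂ : List (FreeGroup α)) :
    seqInv (l₁ ++ l₂) = seqInv l₂ ++ seqInv l₁ := by
  simp [seqInv]

@[simp]
theorem seqInv_seqInv (l : List (FreeGroup α)) : seqInv (seqInv l) = l := by
  simp [seqInv]

@[simp]
theorem length_seqInv (l : List (FreeGroup α)) : (seqInv l).length = l.length := by
  simp [seqInv]

theorem zetaL_append (A : FreeGroup α → FreeGroup α → FreeGroup α → ℝ)
    (l₁ l₂ : List (FreeGroup α)) (g' h : FreeGroup α) :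
    zetaL A (l₁ ++ l₂) g' h = zetaL A l₁ (l₂.prod * g') h + zetaL A l₂ g' h := by
  induction l₁ with
  | nil => simp [zetaL]
  | cons p l ih =>
    simp only [List.cons_append, zetaL, ih, List.prod_append, mul_assoc]
    ring

theorem abs_zetaL_le (A : FreeGroup α → FreeGroup α → FreeGroup α → ℝ) {M : ℝ}
    {l : List (FreeGroup α)} (hM : ∀ p ∈ l, ∀ u v, |A p u v| ≤ M) (g' h : FreeGroup α) :
    |zetaL A l g' h| ≤ l.length * M := by
  induction l with
  | nil => simp [zetaL]
  | cons p l ih =>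
    have hp := hM p List.mem_cons_self (l.prod * g') h
    have hl := ih fun q hq => hM q (List.mem_cons_of_mem _ hq)
    calc |zetaL A (p :: l) g' h| ≤ |A p (l.prod * g') h| + |zetaL A l g' h| := abs_add_le _ _
      _ ≤ ((p :: l).length : ℝ) * M := by push_cast [List.length_cons]; linarith

end Sequences

section Decomposition

variable {α : Type} [DecidableEq α]

theorem wlen_mul_le (g h : FreeGroup α) : wlen (g * h) ≤ wlen g + wlen h :=
  FreeGroup.norm_mul_le g h

theorem wlen_inv (g : FreeGroup α) : wlen g⁻¹ = wlen g :=
  FreeGroup.norm_inv_eq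

namespace Decomp

variable (dec : Decomp α)

theorem D_eq_singleton_of_mem {g p : FreeGroup α} (hp : p ∈ dec.D g) : dec.D p = [p] := by
  obtain ⟨s, t, hst⟩ := List.append_of_mem hp
  simpa using dec.infix_closed g s [p] t (by simpa using hst)

theorem wlen_eq_of_D_eq_cons {g p : FreeGroup α} {r : List (FreeGroup α)}
    (h : dec.D g = p :: r) : wlen g = wlen p + wlen r.prod := by
  have hr : dec.D r.prod = r := dec.infix_closed g [p] r [] (by simp [h])
  have hg := dec.reduced g
  have hr' := dec.reduced r.prod
  rw [ReducedProd, dec.prod_eq, h, List.map_cons, List.sum_cons] at hg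
  rw [ReducedProd, dec.prod_eq, hr] at hr'
  omega

theorem cSeq2_eq_nil {u₁ u₂ : FreeGroup α} (hred : ReducedProd [u₁, u₂]) :
    cSeq2 dec.D u₁ u₂ = [] := by
  by_contra hne
  obtain ⟨p, a, b, ha, hb⟩ := exists_cons_of_commonPrefix_ne_nil hne
  have hp : p ≠ 1 := fun h1 => dec.one_notin_pieces
    (h1 ▸ dec.mem_pieces u₂ p (hb ▸ List.mem_cons_self))
  have hu₁ : u₁⁻¹ = p * a.prod := by rw [← List.prod_cons, ← ha, dec.prod_eq]
  have hu₂ : u₂ = p * b.prod := by rw [← List.prod_cons, ← hb, dec.prod_eq]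
  have hprod : u₁ * u₂ = a.prod⁻¹ * b.prod := by
    rw [← inv_inv u₁, hu₁, hu₂]; group
  have hlen₁ := dec.wlen_eq_of_D_eq_cons ha
  have hlen₂ := dec.wlen_eq_of_D_eq_cons hb
  have hcancel := wlen_mul_le a.prod⁻¹ b.prod
  have hp0 : wlen p ≠ 0 := fun h0 => hp (FreeGroup.norm_eq_zero.mp h0)
  simp only [ReducedProd, List.prod_cons, List.prod_nil, mul_one, List.map_cons, List.map_nil,
    List.sum_cons, List.sum_nil, add_zero] at hred
  rw [hprod] at hred
  rw [wlen_inv] at hcancel hlen₁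
  omega

theorem D_left_of_reducedProd {u₁ u₂ : FreeGroup α} (hred : ReducedProd [u₁, u₂]) :
    dec.D u₁ = cSeq1 dec.D u₁ u₂ ++ rSeq1 dec.D u₁ u₂ := by
  simpa [dec.cSeq2_eq_nil hred, seqInv] using dec.triangle₁ u₁ u₂

theorem D_right_of_reducedProd {u₁ u₂ : FreeGroup α} (hred : ReducedProd [u₁, u₂]) :
    dec.D u₂ = rSeq2 dec.D u₁ u₂ ++ seqInv (cSeq3 dec.D u₁ u₂) := by
  simpa [dec.cSeq2_eq_nil hred] using dec.triangle₂ u₁ u₂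

theorem D_mul (u₁ u₂ : FreeGroup α) :
    dec.D (u₁ * u₂) =
      cSeq1 dec.D u₁ u₂ ++ seqInv (rSeq3 dec.D u₁ u₂) ++ seqInv (cSeq3 dec.D u₁ u₂) := by
  rw [← seqInv_seqInv (dec.D _), ← dec.inv_eq, mul_inv_rev, dec.triangle₃]
  simp

variable {dec} in
theorem abs_zetaL_le_of_subset (A : FreeGroup α → FreeGroup α → FreeGroup α → ℝ) {M : ℝ}
    (hM₀ : 0 ≤ M) (hM : ∀ g, ∀ p ∈ dec.D g, ∀ u v, |A p u v| ≤ M) {g : FreeGroup α}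
    {l : List (FreeGroup α)} (hl : l ⊆ dec.D g) (hlen : l.length ≤ dec.R) (g' h : FreeGroup α) :
    |zetaL A l g' h| ≤ dec.R * M :=
  calc |zetaL A l g' h| ≤ l.length * M :=
        abs_zetaL_le A (fun p hp => hM g p (hl hp)) g' h
    _ ≤ dec.R * M := by gcongr

theorem abs_zetaL_splitting_le (A : FreeGroup α → FreeGroup α → FreeGroup α → ℝ) {M : ℝ}
    (hM₀ : 0 ≤ M) (hM : ∀ g, ∀ p ∈ dec.D g, ∀ u v, |A p u v| ≤ M) {u₁ u₂ : FreeGroup α}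
    (hred : ReducedProd [u₁, u₂]) (v : FreeGroup α) :
    |zetaL A (dec.D (u₁ * u₂)) 1 v - zetaL A (dec.D u₁) u₂ v - zetaL A (dec.D u₂) 1 v| ≤
      3 * dec.R * M := by
  set c := cSeq1 dec.D u₁ u₂
  set r₁ := rSeq1 dec.D u₁ u₂
  set r₂ := rSeq2 dec.D u₁ u₂
  set r₃ := rSeq3 dec.D u₁ u₂
  set e := seqInv (cSeq3 dec.D u₁ u₂)
  have h₁ : dec.D u₁ = c ++ r₁ := dec.D_left_of_reducedProd hred
  have h₂ : dec.D u₂ = r₂ ++ e := dec.D_right_of_reducedProd hred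
  have h₃ : dec.D (u₁ * u₂) = c ++ seqInv r₃ ++ e := dec.D_mul u₁ u₂
  have htail : (seqInv r₃).prod * (e.prod * 1) = r₁.prod * u₂ := by
    have hc₁ := dec.prod_eq u₁
    have hc₃ := dec.prod_eq (u₁ * u₂)
    rw [h₁, List.prod_append] at hc₁
    rw [h₃, List.prod_append, List.prod_append] at hc₃
    rw [← hc₁, mul_assoc, mul_assoc] at hc₃
    simpa using hc₃
  have b₁ : |zetaL A r₁ u₂ v| ≤ dec.R * M :=
    abs_zetaL_le_of_subset A hM₀ hM (h₁ ▸ List.subset_append_right c r₁) (dec.rBound₁ u₁ u₂) _ _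
  have b₂ : |zetaL A r₂ (e.prod * 1) v| ≤ dec.R * M :=
    abs_zetaL_le_of_subset A hM₀ hM (h₂ ▸ List.subset_append_left r₂ e) (dec.rBound₂ u₁ u₂) _ _
  have b₃ : |zetaL A (seqInv r₃) (e.prod * 1) v| ≤ dec.R * M :=
    abs_zetaL_le_of_subset A hM₀ hM (g := u₁ * u₂) (fun p hp => by simp [h₃, hp])
      (by simpa using dec.rBound₃ u₁ u₂) _ _
  rw [h₁, h₂, h₃, zetaL_append, zetaL_append, zetaL_append, zetaL_append, htail]
  rw [abs_le] at b₁ b₂ b₃ ⊢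
  constructor <;> linarith [b₁.1, b₁.2, b₂.1, b₂.2, b₃.1, b₃.2]

end Decomp

end Decomposition

theorem IsDecomposable.exists_abs_le {α : Type} [DecidableEq α] {dec : Decomp α}
    {φ : FreeGroup α → ℝ} (hφ : IsDecomposable dec φ) :
    ∃ B ≥ (0 : ℝ), ∀ g, ∀ p ∈ dec.D g, |φ p| ≤ B := by
  obtain ⟨lam, ⟨B, hB⟩, -, rfl⟩ := hφ
  refine ⟨max B 0, le_max_right _ _, fun g p hp => ?_⟩
  rw [decQM, dec.D_eq_singleton_of_mem hp, List.map_singleton, List.sum_singleton]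
  exact (hB p (dec.mem_pieces g p hp)).trans (le_max_left _ _)

theorem zeta_splitting_bounded_general {α : Type} [DecidableEq α] (dec : Decomp α)
    (φ : FreeGroup α → ℝ) (ω : FreeGroup α → FreeGroup α → ℝ)
    (hφ : IsDecomposable dec φ)
    (hωbd : ∃ C : ℝ, ∀ g h, |ω g h| ≤ C) :
    ∃ C > (0 : ℝ), ∀ u₁ u₂ v : FreeGroup α, ReducedProd [u₁, u₂] →
      |zetaD dec.D φ ω (u₁ * u₂) 1 v - zetaD dec.D φ ω u₁ u₂ v -
        zetaD dec.D φ ω u₂ 1 v| ≤ C := by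
  obtain ⟨B, hB₀, hB⟩ := hφ.exists_abs_le
  obtain ⟨C, hC⟩ := hωbd
  have hC₀ : 0 ≤ C := (abs_nonneg _).trans (hC 1 1)
  have hterm : ∀ g, ∀ p ∈ dec.D g, ∀ u w, |φ p * ω u w| ≤ B * C := fun g p hp u w => by
    rw [abs_mul]; exact mul_le_mul (hB g p hp) (hC u w) (abs_nonneg _) hB₀
  refine ⟨3 * dec.R * (B * C) + 1, by positivity, fun u₁ u₂ v hred => ?_⟩
  exact (dec.abs_zetaL_splitting_le _ (mul_nonneg hB₀ hC₀) hterm hred v).trans (by linarith)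

/-- Proposition 4.3 (1): if `u₁u₂` is reduced then
`ζ(u₁u₂,1,v) − ζ(u₁,u₂,v) − ζ(u₂,1,v)` is uniformly bounded. -/
theorem zeta_splitting_bounded {α : Type} [Fintype α] [DecidableEq α]
    (hab : ∃ a b : α, a ≠ b) (dec : Decomp α)
    (φ : FreeGroup α → ℝ) (ω : FreeGroup α → FreeGroup α → ℝ)
    (hφ : IsDecomposable dec φ)
    (hω : ∃ ψ : FreeGroup α → ℝ, IsSymmetricMap ψ ∧ IsQuasimorphism ψ ∧
      ω = fun g h => d1 ψ g h)
    (hωbd : ∃ C : ℝ, ∀ g h, |ω g h| ≤ C)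
    (hωc : DeltaContinuousCocycle dec.D ω) :
    ∃ C > (0 : ℝ), ∀ u₁ u₂ v : FreeGroup α, ReducedProd [u₁, u₂] →
      |zetaD dec.D φ ω (u₁ * u₂) 1 v - zetaD dec.D φ ω u₁ u₂ v -
        zetaD dec.D φ ω u₂ 1 v| ≤ C :=
  zeta_splitting_bounded_general dec φ ω hφ hωbd
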